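/- arXiv:2411.09365 — 2 statements merged into one kernel-verified Lean document; each statement's English description precedes it below -/
import Mathlib

section
/- Let Θ_y ⊆ ℝ^{d_y} be nonempty, closed and convex, and let F : ℝ^{d_x} × ℝ^{d_y} → ℝ be differentiable with L-Lipschitz gradient and such that F(x,·) is μ-strongly concave on Θ_y for every x (0 < μ ≤ L). Let ŷ(x) denote the unique maximizer of F(x,·) over Θ_y and R(x) = max_{y∈Θ_y} F(x,y), and set κ = L/μ. Then: (a) the map x ↦ ŷ(x) is κ-Lipschitz; (b) R is differentiable with ∇R(x) = ∇_x F(x, ŷ(x)); (c) ∇R is (L + κL)-Lipschitz. -/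
open scoped RealInnerProductSpace

noncomputable section

/-- Euclidean (ℓ2) norm of the concatenation of two vectors. -/
noncomputable def pnorm {E F : Type*} [NormedAddCommGroup E] [NormedAddCommGroup F]
    (u : E) (v : F) : ℝ :=
  Real.sqrt (‖u‖ ^ 2 + ‖v‖ ^ 2)

lemma fst_le_pnorm {E F : Type*} [NormedAddCommGroup E] [NormedAddCommGroup F]
    (u : E) (v : F) : ‖u‖ ≤ pnorm u v :=
  Real.le_sqrt_of_sq_le (le_add_of_nonneg_right (sq_nonneg _))

lemma snd_le_pnorm {E F : Type*} [NormedAddCommGroup E] [NormedAddCommGroup F]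
    (u : E) (v : F) : ‖v‖ ≤ pnorm u v :=
  Real.le_sqrt_of_sq_le (le_add_of_nonneg_left (sq_nonneg _))

lemma pnorm_zero_right {E F : Type*} [NormedAddCommGroup E] [NormedAddCommGroup F]
    (u : E) : pnorm u (0 : F) = ‖u‖ := by
  simp [pnorm, Real.sqrt_sq (norm_nonneg u)]

lemma pnorm_zero_left {E F : Type*} [NormedAddCommGroup E] [NormedAddCommGroup F]
    (v : F) : pnorm (0 : E) v = ‖v‖ := by
  simp [pnorm, Real.sqrt_sq (norm_nonneg v)]


set_option maxHeartbeats 1000000 in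
/-- Danskin-type lemma: for a smooth function that is strongly concave
in its second variable over a nonempty closed convex set, the maximizer map is
`κ`-Lipschitz, and the primal function `R` is differentiable with
`∇R(x) = ∇ₓF(x, ŷ(x))` and `(L + κL)`-Lipschitz gradient, where `κ = L/μ`. -/
theorem stmt_13 {dx dy : ℕ}
    (Θy : Set (EuclideanSpace ℝ (Fin dy)))
    (hΘy : Θy.Nonempty) (hΘycl : IsClosed Θy) (hΘycv : Convex ℝ Θy)
    (F : EuclideanSpace ℝ (Fin dx) → EuclideanSpace ℝ (Fin dy) → ℝ)
    (L μ : ℝ) (hμ : 0 < μ) (hμL : μ ≤ L)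
    (hdiff : Differentiable ℝ
      (fun p : EuclideanSpace ℝ (Fin dx) × EuclideanSpace ℝ (Fin dy) => F p.1 p.2))
    (hlip : ∀ x y x' y',
      pnorm (gradient (fun x'' => F x'' y) x - gradient (fun x'' => F x'' y') x')
            (gradient (fun y'' => F x y'') y - gradient (fun y'' => F x' y'') y')
        ≤ L * pnorm (x - x') (y - y'))
    (hconc : ∀ x, ∀ y ∈ Θy, ∀ y' ∈ Θy,
      F x y' ≤ F x y + ⟪gradient (fun y'' => F x y'') y, y' - y⟫ - μ / 2 * ‖y' - y‖ ^ 2)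
    (yhat : EuclideanSpace ℝ (Fin dx) → EuclideanSpace ℝ (Fin dy))
    (hyhatMem : ∀ x, yhat x ∈ Θy)
    (hyhatMax : ∀ x, ∀ y ∈ Θy, F x y ≤ F x (yhat x))
    (hyhatUniq : ∀ x y, y ∈ Θy → (∀ y' ∈ Θy, F x y' ≤ F x y) → y = yhat x)
    (R : EuclideanSpace ℝ (Fin dx) → ℝ)
    (hR : ∀ x, R x = sSup ((fun y => F x y) '' Θy)) :
    (∀ x x', ‖yhat x - yhat x'‖ ≤ L / μ * ‖x - x'‖) ∧
    (Differentiable ℝ R ∧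
      ∀ x, gradient R x = gradient (fun x' => F x' (yhat x)) x) ∧
    (∀ x x', ‖gradient R x - gradient R x'‖ ≤ (L + L / μ * L) * ‖x - x'‖) := by
  have hL : (0:ℝ) < L := lt_of_lt_of_le hμ hμL
  set gx : EuclideanSpace ℝ (Fin dx) → EuclideanSpace ℝ (Fin dy) → EuclideanSpace ℝ (Fin dx) :=
    fun x y => gradient (fun x'' => F x'' y) x with hgx
  set gy : EuclideanSpace ℝ (Fin dx) → EuclideanSpace ℝ (Fin dy) → EuclideanSpace ℝ (Fin dy) :=
    fun x y => gradient (fun y'' => F x y'') y with hgy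
  -- differentiability of partial maps
  have hdx : ∀ y, Differentiable ℝ (fun x' => F x' y) := fun y =>
    hdiff.comp (differentiable_id.prodMk (differentiable_const y))
  have hdy : ∀ x, Differentiable ℝ (fun y' => F x y') := fun x =>
    hdiff.comp ((differentiable_const x).prodMk differentiable_id)
  -- Lipschitz bounds for partial gradients
  have hlipx : ∀ x y x' y', ‖gx x y - gx x' y'‖ ≤ L * pnorm (x - x') (y - y') :=
    fun x y x' y' => le_trans (fst_le_pnorm _ _) (hlip x y x' y')
  have hlipy : ∀ x y x' y', ‖gy x y - gy x' y'‖ ≤ L * pnorm (x - x') (y - y') :=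
    fun x y x' y' => le_trans (snd_le_pnorm _ _) (hlip x y x' y')
  have hlipx_x : ∀ y x x', ‖gx x y - gx x' y‖ ≤ L * ‖x - x'‖ := by
    intro y x x'
    have := hlipx x y x' y
    rwa [sub_self, pnorm_zero_right] at this
  have hlipx_y : ∀ x y y', ‖gx x y - gx x y'‖ ≤ L * ‖y - y'‖ := by
    intro x y y'
    have := hlipx x y x y'
    rwa [sub_self, pnorm_zero_left] at this
  have hlipy_y : ∀ x y y', ‖gy x y - gy x y'‖ ≤ L * ‖y - y'‖ := by
    intro x y y'
    have := hlipy x y x y'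
    rwa [sub_self, pnorm_zero_left] at this
  have hlipy_x : ∀ y x x', ‖gy x y - gy x' y‖ ≤ L * ‖x - x'‖ := by
    intro y x x'
    have := hlipy x y x' y
    rwa [sub_self, pnorm_zero_right] at this
  -- Taylor-type bound in x
  have taylor : ∀ (y : EuclideanSpace ℝ (Fin dy)) (x x' : EuclideanSpace ℝ (Fin dx)),
      |F x' y - F x y - ⟪gx x y, x' - x⟫| ≤ L * ‖x' - x‖ * ‖x' - x‖ := by
    intro y x x'
    have hconv : Convex ℝ (Metric.closedBall x ‖x' - x‖) := convex_closedBall _ _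
    have hx : x ∈ Metric.closedBall x ‖x' - x‖ := Metric.mem_closedBall_self (norm_nonneg _)
    have hx' : x' ∈ Metric.closedBall x ‖x' - x‖ := by
      rw [Metric.mem_closedBall, dist_eq_norm]
    have hbound : ∀ z ∈ Metric.closedBall x ‖x' - x‖,
        ‖(InnerProductSpace.toDual ℝ _) (gx z y) - (InnerProductSpace.toDual ℝ _) (gx x y)‖
          ≤ L * ‖x' - x‖ := by
      intro z hz
      rw [← map_sub, LinearIsometryEquiv.norm_map]
      refine le_trans (hlipx_x y z x) ?_
      have hz' : ‖z - x‖ ≤ ‖x' - x‖ := by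
        rw [← dist_eq_norm]; exact Metric.mem_closedBall.mp hz
      exact mul_le_mul_of_nonneg_left hz' hL.le
    have := hconv.norm_image_sub_le_of_norm_hasFDerivWithin_le'
      (f := fun z => F z y)
      (f' := fun z => (InnerProductSpace.toDual ℝ _) (gx z y))
      (φ := (InnerProductSpace.toDual ℝ _) (gx x y))
      (fun z _ => ((hdx y z).hasGradientAt.hasFDerivAt).hasFDerivWithinAt)
      hbound hx hx'
    rw [InnerProductSpace.toDual_apply_apply, Real.norm_eq_abs] at this
    exact this
  -- quadratic growth at the maximizer
  have hstar : ∀ x, ∀ y ∈ Θy, μ / 2 * ‖yhat x - y‖ ^ 2 ≤ ⟪gy x y, yhat x - y⟫ := by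
    intro x y hy
    have h1 := hconc x y hy (yhat x) (hyhatMem x)
    have h2 := hyhatMax x y hy
    linarith
  -- first-order optimality condition
  have foc : ∀ x, ∀ y' ∈ Θy, ⟪gy x (yhat x), y' - yhat x⟫ ≤ 0 := by
    intro x y' hy'
    set v : EuclideanSpace ℝ (Fin dy) := y' - yhat x with hv
    have haux : ∀ t : ℝ, 0 < t → t ≤ 1 →
        ⟪gy x (yhat x), v⟫ ≤ t * (L * ‖v‖ ^ 2) := by
      intro t ht ht1
      set yt : EuclideanSpace ℝ (Fin dy) := yhat x + t • v with hyt
      have hytmem : yt ∈ Θy := by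
        have h := hΘycv (hyhatMem x) hy' (by linarith : (0:ℝ) ≤ 1 - t) ht.le (by ring)
        have : (1 - t) • yhat x + t • y' = yt := by
          rw [hyt, hv]; module
        rwa [this] at h
      have hdiffyt : yhat x - yt = -(t • v) := by rw [hyt]; abel
      have hnyt : ‖yhat x - yt‖ = t * ‖v‖ := by
        rw [hdiffyt, norm_neg, norm_smul, Real.norm_eq_abs, abs_of_pos ht]
      have hs := hstar x yt hytmem
      have hn2 : ‖-(t • v)‖ = t * ‖v‖ := by
        rw [norm_neg, norm_smul, Real.norm_eq_abs, abs_of_pos ht]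
      rw [hdiffyt, inner_neg_right, real_inner_smul_right, hn2] at hs
      have hinner_t : ⟪gy x yt, v⟫ ≤ 0 := by
        by_contra h
        push_neg at h
        have h1 := mul_pos ht h
        have h2 : (0:ℝ) ≤ μ / 2 * (t * ‖v‖) ^ 2 :=
          mul_nonneg (by linarith) (sq_nonneg _)
        linarith
      have hsplit : ⟪gy x (yhat x), v⟫
          = ⟪gy x (yhat x) - gy x yt, v⟫ + ⟪gy x yt, v⟫ := by
        rw [inner_sub_left]; ring
      have hcs : ⟪gy x (yhat x) - gy x yt, v⟫ ≤ ‖gy x (yhat x) - gy x yt‖ * ‖v‖ :=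
        real_inner_le_norm _ _
      have hlipb : ‖gy x (yhat x) - gy x yt‖ ≤ L * (t * ‖v‖) := by
        have := hlipy_y x (yhat x) yt
        rwa [hnyt] at this
      have : ⟪gy x (yhat x), v⟫ ≤ L * (t * ‖v‖) * ‖v‖ := by
        rw [hsplit]
        have := mul_le_mul_of_nonneg_right hlipb (norm_nonneg v)
        calc ⟪gy x (yhat x) - gy x yt, v⟫ + ⟪gy x yt, v⟫
            ≤ ‖gy x (yhat x) - gy x yt‖ * ‖v‖ + 0 := by linarith
          _ ≤ L * (t * ‖v‖) * ‖v‖ := by linarith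
      calc ⟪gy x (yhat x), v⟫ ≤ L * (t * ‖v‖) * ‖v‖ := this
        _ = t * (L * ‖v‖ ^ 2) := by ring
    -- conclude by letting t → 0
    by_contra hcon
    push_neg at hcon
    set a : ℝ := ⟪gy x (yhat x), v⟫ with ha
    set c : ℝ := L * ‖v‖ ^ 2 with hc
    have hc0 : 0 ≤ c := by positivity
    have hc1 : (0:ℝ) < c + 1 := by linarith
    set t : ℝ := min 1 (a / (2 * (c + 1))) with htdef
    have ht0 : 0 < t := lt_min one_pos (by positivity)
    have ht1 : t ≤ 1 := min_le_left _ _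
    have hbound := haux t ht0 ht1
    have h1 : t * c ≤ (a / (2 * (c + 1))) * (c + 1) := by
      have h2 : t ≤ a / (2 * (c + 1)) := min_le_right _ _
      have := mul_le_mul h2 (by linarith : c ≤ c + 1) hc0 (by positivity)
      linarith
    have h2 : (a / (2 * (c + 1))) * (c + 1) = a / 2 := by
      field_simp
    rw [h2] at h1
    linarith
  -- Part (a)
  have parta : ∀ x x', ‖yhat x - yhat x'‖ ≤ L / μ * ‖x - x'‖ := by
    intro x x'
    set d : ℝ := ‖yhat x - yhat x'‖ with hd
    set e : ℝ := ‖x - x'‖ with he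
    rcases eq_or_lt_of_le (norm_nonneg (yhat x - yhat x')) with h0 | h0
    · have hd0 : d = 0 := hd.trans h0.symm
      rw [hd0]
      positivity
    · have h1 := hconc x (yhat x) (hyhatMem x) (yhat x') (hyhatMem x')
      have h2 := hconc x (yhat x') (hyhatMem x') (yhat x) (hyhatMem x)
      have hnrev : ‖yhat x' - yhat x‖ = d := norm_sub_rev _ _
      rw [hnrev] at h1
      have foc1 : ⟪gy x (yhat x), yhat x' - yhat x⟫ ≤ 0 := foc x (yhat x') (hyhatMem x')
      have foc2 : ⟪gy x' (yhat x'), yhat x - yhat x'⟫ ≤ 0 := foc x' (yhat x) (hyhatMem x)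
      -- μ d² ≤ ⟪gy x ŷx', ŷx - ŷx'⟫
      have hB : μ * d ^ 2 ≤ ⟪gy x (yhat x'), yhat x - yhat x'⟫ := by linarith
      have hBC : μ * d ^ 2 ≤ ⟪gy x (yhat x') - gy x' (yhat x'), yhat x - yhat x'⟫ := by
        rw [inner_sub_left]
        linarith
      have hcs : ⟪gy x (yhat x') - gy x' (yhat x'), yhat x - yhat x'⟫
          ≤ ‖gy x (yhat x') - gy x' (yhat x')‖ * d := real_inner_le_norm _ _
      have hlb : ‖gy x (yhat x') - gy x' (yhat x')‖ ≤ L * e := hlipy_x (yhat x') x x'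
      have : μ * d ^ 2 ≤ L * e * d := by
        calc μ * d ^ 2 ≤ ‖gy x (yhat x') - gy x' (yhat x')‖ * d := le_trans hBC hcs
          _ ≤ L * e * d := mul_le_mul_of_nonneg_right hlb (by positivity)
      have hμd : μ * d ≤ L * e := by nlinarith [mul_pos hμ h0]
      rw [div_mul_eq_mul_div, le_div_iff₀ hμ]
      nlinarith
  -- R x = F x (yhat x)
  have hReq : ∀ x, R x = F x (yhat x) := by
    intro x
    rw [hR]
    apply le_antisymm
    · exact csSup_le (hΘy.image _) (by rintro _ ⟨y, hy, rfl⟩; exact hyhatMax x y hy)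
    · exact le_csSup ⟨F x (yhat x), by rintro _ ⟨y, hy, rfl⟩; exact hyhatMax x y hy⟩
        ⟨yhat x, hyhatMem x, rfl⟩
  set C : ℝ := L + L / μ * L with hCdef
  have hC0 : 0 < C := by positivity
  -- key quantitative bound
  have key : ∀ x x', |R x' - R x - ⟪gx x (yhat x), x' - x⟫| ≤ C * (‖x' - x‖ * ‖x' - x‖) := by
    intro x x'
    have t1 := taylor (yhat x) x x'
    have t2 := taylor (yhat x') x x'
    have hlow : F x' (yhat x) ≤ R x' := by
      rw [hReq x']; exact hyhatMax x' _ (hyhatMem x)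
    have hup : F x (yhat x') ≤ R x := by
      rw [hReq x]; exact hyhatMax x _ (hyhatMem x')
    have hRx : R x = F x (yhat x) := hReq x
    have hRx' : R x' = F x' (yhat x') := hReq x'
    have hcross : ⟪gx x (yhat x') - gx x (yhat x), x' - x⟫
        ≤ L * (L / μ * ‖x' - x‖) * ‖x' - x‖ := by
      have hcs : ⟪gx x (yhat x') - gx x (yhat x), x' - x⟫
          ≤ ‖gx x (yhat x') - gx x (yhat x)‖ * ‖x' - x‖ := real_inner_le_norm _ _
      have hl1 : ‖gx x (yhat x') - gx x (yhat x)‖ ≤ L * ‖yhat x' - yhat x‖ :=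
        hlipx_y x (yhat x') (yhat x)
      have hl2 : ‖yhat x' - yhat x‖ ≤ L / μ * ‖x' - x‖ := parta x' x
      calc ⟪gx x (yhat x') - gx x (yhat x), x' - x⟫
          ≤ ‖gx x (yhat x') - gx x (yhat x)‖ * ‖x' - x‖ := hcs
        _ ≤ L * (L / μ * ‖x' - x‖) * ‖x' - x‖ := by
            refine mul_le_mul_of_nonneg_right ?_ (norm_nonneg _)
            calc ‖gx x (yhat x') - gx x (yhat x)‖ ≤ L * ‖yhat x' - yhat x‖ := hl1
              _ ≤ L * (L / μ * ‖x' - x‖) := mul_le_mul_of_nonneg_left hl2 hL.le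
    have hsplit : ⟪gx x (yhat x'), x' - x⟫
        = ⟪gx x (yhat x') - gx x (yhat x), x' - x⟫ + ⟪gx x (yhat x), x' - x⟫ := by
      rw [inner_sub_left]; ring
    rw [abs_le] at t1 t2 ⊢
    have hnn : (0:ℝ) ≤ L / μ * L * (‖x' - x‖ * ‖x' - x‖) :=
      mul_nonneg (mul_nonneg (div_nonneg hL.le hμ.le) hL.le)
        (mul_nonneg (norm_nonneg _) (norm_nonneg _))
    have hCexp : C * (‖x' - x‖ * ‖x' - x‖)
        = L * ‖x' - x‖ * ‖x' - x‖ + L / μ * L * (‖x' - x‖ * ‖x' - x‖) := by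
      rw [hCdef]; ring
    constructor
    · calc -(C * (‖x' - x‖ * ‖x' - x‖))
          = -(L * ‖x' - x‖ * ‖x' - x‖) - L / μ * L * (‖x' - x‖ * ‖x' - x‖) := by
            rw [hCexp]; ring
        _ ≤ -(L * ‖x' - x‖ * ‖x' - x‖) := by linarith
        _ ≤ F x' (yhat x) - F x (yhat x) - ⟪gx x (yhat x), x' - x⟫ := t1.1
        _ ≤ R x' - R x - ⟪gx x (yhat x), x' - x⟫ := by linarith
    · calc R x' - R x - ⟪gx x (yhat x), x' - x⟫
          ≤ F x' (yhat x') - F x (yhat x') - ⟪gx x (yhat x), x' - x⟫ := by linarith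
        _ = (F x' (yhat x') - F x (yhat x') - ⟪gx x (yhat x'), x' - x⟫)
            + ⟪gx x (yhat x') - gx x (yhat x), x' - x⟫ := by rw [hsplit]; ring
        _ ≤ L * ‖x' - x‖ * ‖x' - x‖ + L * (L / μ * ‖x' - x‖) * ‖x' - x‖ := by
            have := t2.2
            linarith
        _ ≤ C * (‖x' - x‖ * ‖x' - x‖) := by rw [hCexp]; ring_nf; linarith
  -- gradient of R
  have hgrad : ∀ x, HasGradientAt R (gx x (yhat x)) x := by
    intro x
    rw [hasGradientAt_iff_isLittleO, Asymptotics.isLittleO_iff]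
    intro ε hε
    have hεC : 0 < ε / C := div_pos hε hC0
    filter_upwards [Metric.ball_mem_nhds x hεC] with x' hx'
    have hball : ‖x' - x‖ < ε / C := by
      rw [← dist_eq_norm]; exact hx'
    have h1 := key x x'
    rw [Real.norm_eq_abs]
    calc |R x' - R x - ⟪gx x (yhat x), x' - x⟫| ≤ C * (‖x' - x‖ * ‖x' - x‖) := h1
      _ ≤ ε * ‖x' - x‖ := by
          rcases le_or_gt ‖x' - x‖ 0 with h | h
          · have : ‖x' - x‖ = 0 := le_antisymm h (norm_nonneg _)
            rw [this]; ring_nf; exact le_refl 0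
          · have h2 : ‖x' - x‖ * C < ε := (lt_div_iff₀ hC0).mp hball
            nlinarith
  have hgradR : ∀ x, gradient R x = gx x (yhat x) := fun x => (hgrad x).gradient
  refine ⟨parta, ⟨fun x => (hgrad x).differentiableAt, fun x => hgradR x⟩, ?_⟩
  intro x x'
  rw [hgradR x, hgradR x']
  have htri : ‖gx x (yhat x) - gx x' (yhat x')‖
      ≤ ‖gx x (yhat x) - gx x' (yhat x)‖ + ‖gx x' (yhat x) - gx x' (yhat x')‖ := by
    have : gx x (yhat x) - gx x' (yhat x')
        = (gx x (yhat x) - gx x' (yhat x)) + (gx x' (yhat x) - gx x' (yhat x')) := by abel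
    rw [this]; exact norm_add_le _ _
  have h1 : ‖gx x (yhat x) - gx x' (yhat x)‖ ≤ L * ‖x - x'‖ := hlipx_x (yhat x) x x'
  have h2 : ‖gx x' (yhat x) - gx x' (yhat x')‖ ≤ L * ‖yhat x - yhat x'‖ :=
    hlipx_y x' (yhat x) (yhat x')
  have h3 : ‖yhat x - yhat x'‖ ≤ L / μ * ‖x - x'‖ := parta x x'
  calc ‖gx x (yhat x) - gx x' (yhat x')‖
      ≤ ‖gx x (yhat x) - gx x' (yhat x)‖ + ‖gx x' (yhat x) - gx x' (yhat x')‖ := htri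
    _ ≤ L * ‖x - x'‖ + L * (L / μ * ‖x - x'‖) := by
        refine add_le_add h1 (le_trans h2 (mul_le_mul_of_nonneg_left h3 hL.le))
    _ = (L + L / μ * L) * ‖x - x'‖ := by ring

end
end

section
/- Consider Distributed-SGDA A(T,K,W) with constant step size η^t_k = η and every local loss f_i G-Lipschitz, with λ := ‖W − P_m‖₂ < 1. Then for every realization of the random sample indices, every round t ≥ 1 and every local step 0 ≤ k ≤ K, the consensus term satisfies Δ^t_k ≤ η·G·√( (1/(1−λ))·( k² + (2λ/(1−λ²))·K² ) ). -/
open MeasureTheory Finset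
open scoped RealInnerProductSpace ENNReal

noncomputable section

abbrev Vec (d : ℕ) : Type := EuclideanSpace ℝ (Fin d)

/-- Partial gradient in the first variable. -/
noncomputable def gradX {dx dy : ℕ} (g : Vec dx → Vec dy → ℝ) (x : Vec dx) (y : Vec dy) : Vec dx :=
  gradient (fun x' => g x' y) x

/-- Partial gradient in the second variable. -/
noncomputable def gradY {dx dy : ℕ} (g : Vec dx → Vec dy → ℝ) (x : Vec dx) (y : Vec dy) : Vec dy :=
  gradient (fun y' => g x y') y

variable {dx dy m n : ℕ} {Z : Fin m → Type*}

/-- Distributed neighboring datasets: each local dataset differs in at most one sample. -/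
def Neighboring (S S' : ∀ i, Fin n → Z i) : Prop :=
  ∀ i, ∃ l₀ : Fin n, ∀ l, l ≠ l₀ → S i l = S' i l

/-- `G`-Lipschitz continuity of every local loss, jointly in `(x, y)`. -/
def GLip (G : ℝ) (f : ∀ i, Vec dx → Vec dy → Z i → ℝ) : Prop :=
  ∀ i (ξ : Z i) x y x' y', |f i x y ξ - f i x' y' ξ| ≤ G * pnorm (x - x') (y - y')

/-- `L`-smoothness of every local loss: differentiability plus `L`-Lipschitz gradients. -/
def LSmooth (L : ℝ) (f : ∀ i, Vec dx → Vec dy → Z i → ℝ) : Prop :=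
  (∀ i (ξ : Z i), Differentiable ℝ (fun p : Vec dx × Vec dy => f i p.1 p.2 ξ)) ∧
  ∀ i (ξ : Z i) x y x' y',
    pnorm (gradX (fun a b => f i a b ξ) x y - gradX (fun a b => f i a b ξ) x' y')
          (gradY (fun a b => f i a b ξ) x y - gradY (fun a b => f i a b ξ) x' y')
      ≤ L * pnorm (x - x') (y - y')

/-- `μ`-strong convexity in `x` and `μ`-strong concavity in `y` of every local loss. -/
def SCSC (μ : ℝ) (f : ∀ i, Vec dx → Vec dy → Z i → ℝ) : Prop :=
  (∀ i (ξ : Z i) y x x',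
      f i x y ξ + ⟪gradX (fun a b => f i a b ξ) x y, x' - x⟫ + μ / 2 * ‖x' - x‖ ^ 2
        ≤ f i x' y ξ) ∧
  (∀ i (ξ : Z i) x y y',
      f i x y' ξ ≤ f i x y ξ + ⟪gradY (fun a b => f i a b ξ) x y, y' - y⟫
        - μ / 2 * ‖y' - y‖ ^ 2)

/-- One local SGDA step with stepsize `η` and sample indices `jj`. -/
noncomputable def sgdaStep (f : ∀ i, Vec dx → Vec dy → Z i → ℝ) (S : ∀ i, Fin n → Z i)
    (η : ℝ) (jj : Fin m → Fin n) (st : Fin m → Vec dx × Vec dy) : Fin m → Vec dx × Vec dy :=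
  fun i =>
    ((st i).1 - η • gradX (fun a b => f i a b (S i (jj i))) (st i).1 (st i).2,
     (st i).2 + η • gradY (fun a b => f i a b (S i (jj i))) (st i).1 (st i).2)

/-- `k` local SGDA steps within communication round `t`. -/
noncomputable def sgdaLocal (f : ∀ i, Vec dx → Vec dy → Z i → ℝ) (S : ∀ i, Fin n → Z i)
    (η : ℕ → ℕ → ℝ) (j : ℕ → ℕ → Fin m → Fin n) (t : ℕ) :
    ℕ → (Fin m → Vec dx × Vec dy) → (Fin m → Vec dx × Vec dy)
  | 0, st => st
  | k + 1, st => sgdaStep f S (η t k) (j t k) (sgdaLocal f S η j t k st)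

/-- Communication through the mixing matrix `W`. -/
noncomputable def sgdaComm (W : Matrix (Fin m) (Fin m) ℝ) (st : Fin m → Vec dx × Vec dy) :
    Fin m → Vec dx × Vec dy :=
  fun i => (∑ h, W i h • (st h).1, ∑ h, W i h • (st h).2)

/-- The state `(x^t_i, y^t_i)_i` after `t` communication rounds of Distributed-SGDA. -/
noncomputable def sgdaRound (f : ∀ i, Vec dx → Vec dy → Z i → ℝ) (S : ∀ i, Fin n → Z i)
    (W : Matrix (Fin m) (Fin m) ℝ) (η : ℕ → ℕ → ℝ) (K : ℕ) (j : ℕ → ℕ → Fin m → Fin n) :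
    ℕ → (Fin m → Vec dx × Vec dy)
  | 0 => fun _ => (0, 0)
  | t + 1 => sgdaComm W (sgdaLocal f S η j (t + 1) K (sgdaRound f S W η K j t))

/-- The local iterates `(x^t_{i,k}, y^t_{i,k})_i` (for rounds `t ≥ 1`). -/
noncomputable def sgdaIter (f : ∀ i, Vec dx → Vec dy → Z i → ℝ) (S : ∀ i, Fin n → Z i)
    (W : Matrix (Fin m) (Fin m) ℝ) (η : ℕ → ℕ → ℝ) (K : ℕ) (j : ℕ → ℕ → Fin m → Fin n)
    (t k : ℕ) : Fin m → Vec dx × Vec dy :=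
  sgdaLocal f S η j t k (sgdaRound f S W η K j (t - 1))

/-- Output `A_x(S) = (1/m) ∑ᵢ x^T_i`. -/
noncomputable def sgdaOutX (f : ∀ i, Vec dx → Vec dy → Z i → ℝ) (S : ∀ i, Fin n → Z i)
    (W : Matrix (Fin m) (Fin m) ℝ) (η : ℕ → ℕ → ℝ) (K : ℕ) (j : ℕ → ℕ → Fin m → Fin n)
    (T : ℕ) : Vec dx :=
  (m : ℝ)⁻¹ • ∑ i, (sgdaRound f S W η K j T i).1

/-- Output `A_y(S) = (1/m) ∑ᵢ y^T_i`. -/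
noncomputable def sgdaOutY (f : ∀ i, Vec dx → Vec dy → Z i → ℝ) (S : ∀ i, Fin n → Z i)
    (W : Matrix (Fin m) (Fin m) ℝ) (η : ℕ → ℕ → ℝ) (K : ℕ) (j : ℕ → ℕ → Fin m → Fin n)
    (T : ℕ) : Vec dy :=
  (m : ℝ)⁻¹ • ∑ i, (sgdaRound f S W η K j T i).2

/-- Average of the `x`-components of a state. -/
noncomputable def xbar (st : Fin m → Vec dx × Vec dy) : Vec dx := (m : ℝ)⁻¹ • ∑ i, (st i).1

/-- Average of the `y`-components of a state. -/
noncomputable def ybar (st : Fin m → Vec dx × Vec dy) : Vec dy := (m : ℝ)⁻¹ • ∑ i, (st i).2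

/-- Consensus error of a state. -/
noncomputable def consensus (st : Fin m → Vec dx × Vec dy) : ℝ :=
  (m : ℝ)⁻¹ * ∑ i, pnorm ((st i).1 - xbar st) ((st i).2 - ybar st)

/-- Consensus term `Δ^t_k`. -/
noncomputable def sgdaCons (f : ∀ i, Vec dx → Vec dy → Z i → ℝ) (S : ∀ i, Fin n → Z i)
    (W : Matrix (Fin m) (Fin m) ℝ) (η : ℕ → ℕ → ℝ) (K : ℕ) (j : ℕ → ℕ → Fin m → Fin n)
    (t k : ℕ) : ℝ :=
  consensus (sgdaIter f S W η K j t k)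

/-- The sample indices `j^t_k(i)` are independent and uniformly distributed on `Fin n`. -/
def UnifIID {Ω : Type*} [MeasurableSpace Ω] {m n : ℕ}
    (j : Ω → ℕ → ℕ → Fin m → Fin n) (P : Measure Ω) : Prop :=
  (∀ t k i, Measurable fun ω => j ω t k i) ∧
  (∀ t k i (a : Fin n), P {ω | j ω t k i = a} = (n : ℝ≥0∞)⁻¹) ∧
  ProbabilityTheory.iIndepFun
    (fun (p : ℕ × ℕ × Fin m) ω => j ω p.1 p.2.1 p.2.2) P

/-- Spectral norm (ℓ2 operator norm) of a real matrix. -/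
noncomputable def specNorm {a b : ℕ} (A : Matrix (Fin a) (Fin b) ℝ) : ℝ :=
  ‖LinearMap.toContinuousLinearMap (Matrix.toEuclideanLin A)‖

/-- The matrix `P_m` with all entries `1/m`. -/
noncomputable def Pmat (m : ℕ) : Matrix (Fin m) (Fin m) ℝ :=
  Matrix.of fun _ _ => (m : ℝ)⁻¹


/-- Empirical objective `F_S`. -/
noncomputable def empF (f : ∀ i, Vec dx → Vec dy → Z i → ℝ) (S : ∀ i, Fin n → Z i)
    (x : Vec dx) (y : Vec dy) : ℝ :=
  (m : ℝ)⁻¹ * ∑ i, ((n : ℝ)⁻¹ * ∑ l, f i x y (S i l))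

/-- Averaged iterate `x̃^T_K = (1/(TK)) ∑_{t=1}^T ∑_{k=0}^{K-1} x̄^t_k`. -/
noncomputable def sgdaAvgX (f : ∀ i, Vec dx → Vec dy → Z i → ℝ) (S : ∀ i, Fin n → Z i)
    (W : Matrix (Fin m) (Fin m) ℝ) (η : ℕ → ℕ → ℝ) (K : ℕ) (j : ℕ → ℕ → Fin m → Fin n)
    (T : ℕ) : Vec dx :=
  ((T : ℝ) * K)⁻¹ • ∑ t ∈ Icc 1 T, ∑ k ∈ range K, xbar (sgdaIter f S W η K j t k)

/-- Averaged iterate `ỹ^T_K`. -/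
noncomputable def sgdaAvgY (f : ∀ i, Vec dx → Vec dy → Z i → ℝ) (S : ∀ i, Fin n → Z i)
    (W : Matrix (Fin m) (Fin m) ℝ) (η : ℕ → ℕ → ℝ) (K : ℕ) (j : ℕ → ℕ → Fin m → Fin n)
    (T : ℕ) : Vec dy :=
  ((T : ℝ) * K)⁻¹ • ∑ t ∈ Icc 1 T, ∑ k ∈ range K, ybar (sgdaIter f S W η K j t k)

/-!
Measure disagreement by the root-mean-square deviation `rmsDev` of the agents' states from their
mean, in the ℓ2 product norm. It dominates the consensus term (mean ≤ RMS), a local step raises it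
by at most `η G` (a `G`-Lipschitz loss has gradients of norm at most `G`), and a communication
step multiplies it by at most `λ = ‖W - P_m‖₂`. Starting from consensus, the deviation at the
start of each round stays below the fixed point `K η G λ / (1 - λ)`, so
`Δ^t_k ≤ η G (k + K λ / (1 - λ))`, which is at most the stated square root.
-/

lemma sqrt_sum_norm_add_sq_le {E : Type*} [SeminormedAddCommGroup E] (a b : Fin m → E) :
    √(∑ i, ‖a i + b i‖ ^ 2) ≤ √(∑ i, ‖a i‖ ^ 2) + √(∑ i, ‖b i‖ ^ 2) := by
  simpa only [PiLp.norm_eq_of_L2, WithLp.ofLp_add, Pi.add_apply] using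
    norm_add_le (WithLp.toLp 2 a) (WithLp.toLp 2 b)

section RmsDeviation

variable {E : Type*} [NormedAddCommGroup E] [InnerProductSpace ℝ E]

def mean (u : Fin m → E) : E := (m : ℝ)⁻¹ • ∑ i, u i

def rmsDev (u : Fin m → E) : ℝ := √((m : ℝ)⁻¹ * ∑ i, ‖u i - mean u‖ ^ 2)

lemma mean_add (u v : Fin m → E) : mean (u + v) = mean u + mean v := by
  simp only [mean, Pi.add_apply, sum_add_distrib, smul_add]

lemma mean_smul (c : ℝ) (u : Fin m → E) : mean (c • u) = c • mean u := by
  simp only [mean, Pi.smul_apply, ← smul_sum, smul_comm c]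

lemma sum_sub_mean (u : Fin m → E) : ∑ i, (u i - mean u) = 0 := by
  rcases Nat.eq_zero_or_pos m with rfl | hm
  · simp
  rw [sum_sub_distrib, sum_const, card_univ, Fintype.card_fin, mean,
    ← Nat.cast_smul_eq_nsmul ℝ, smul_smul, mul_inv_cancel₀ (by positivity), one_smul, sub_self]

lemma sum_norm_sub_mean_sq_le (u : Fin m → E) (c : E) :
    ∑ i, ‖u i - mean u‖ ^ 2 ≤ ∑ i, ‖u i - c‖ ^ 2 := by
  have hsplit : ∀ i, ‖u i - c‖ ^ 2
      = ‖u i - mean u‖ ^ 2 + 2 * ⟪u i - mean u, mean u - c⟫ + ‖mean u - c‖ ^ 2 := fun i => by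
    rw [← norm_add_sq_real, sub_add_sub_cancel]
  simp only [hsplit, sum_add_distrib, ← mul_sum, ← sum_inner, sum_sub_mean,
    inner_zero_left, mul_zero, add_zero]
  exact le_add_of_nonneg_right (sum_nonneg fun _ _ => sq_nonneg _)

lemma rmsDev_le (u : Fin m → E) (c : E) :
    rmsDev u ≤ √((m : ℝ)⁻¹ * ∑ i, ‖u i - c‖ ^ 2) :=
  Real.sqrt_le_sqrt (mul_le_mul_of_nonneg_left (sum_norm_sub_mean_sq_le u c) (by positivity))

@[simp]
lemma rmsDev_zero : rmsDev (0 : Fin m → E) = 0 := by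
  simp [rmsDev, mean]

lemma rmsDev_add_le (u v : Fin m → E) : rmsDev (u + v) ≤ rmsDev u + rmsDev v := by
  have hcentre : ∀ i, (u + v) i - mean (u + v) = (u i - mean u) + (v i - mean v) := fun i => by
    rw [mean_add, Pi.add_apply]; abel
  simp only [rmsDev, hcentre, Real.sqrt_mul' _ (sum_nonneg fun _ _ => sq_nonneg _), ← mul_add]
  gcongr
  exact sqrt_sum_norm_add_sq_le _ _

lemma rmsDev_smul (c : ℝ) (u : Fin m → E) : rmsDev (c • u) = |c| * rmsDev u := by
  have hcentre : ∀ i, (c • u) i - mean (c • u) = c • (u i - mean u) := fun i => by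
    rw [mean_smul, Pi.smul_apply, smul_sub]
  simp only [rmsDev, hcentre, norm_smul, mul_pow, Real.norm_eq_abs, sq_abs, ← mul_sum,
    mul_left_comm _ (c ^ 2), Real.sqrt_mul (sq_nonneg c), Real.sqrt_sq_eq_abs]

lemma rmsDev_le_of_norm_le {G : ℝ} (hG : 0 ≤ G) {u : Fin m → E} (hu : ∀ i, ‖u i‖ ≤ G) :
    rmsDev u ≤ G := by
  refine (rmsDev_le u 0).trans (Real.sqrt_le_iff.mpr ⟨hG, ?_⟩)
  have hsum : ∑ i, ‖u i - 0‖ ^ 2 ≤ m * G ^ 2 := by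
    simpa using sum_le_sum fun i (_ : i ∈ univ) => pow_le_pow_left₀ (norm_nonneg _) (hu i) 2
  calc (m : ℝ)⁻¹ * ∑ i, ‖u i - 0‖ ^ 2 ≤ (m : ℝ)⁻¹ * (m * G ^ 2) := by gcongr
    _ ≤ G ^ 2 := by
      rw [← mul_assoc]
      exact mul_le_of_le_one_left (sq_nonneg G) (inv_mul_le_one_of_le₀ le_rfl (by positivity))

lemma mean_norm_sub_mean_le_rmsDev (u : Fin m → E) :
    (m : ℝ)⁻¹ * ∑ i, ‖u i - mean u‖ ≤ rmsDev u := by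
  refine Real.le_sqrt_of_sq_le ?_
  calc ((m : ℝ)⁻¹ * ∑ i, ‖u i - mean u‖) ^ 2
      ≤ (m : ℝ)⁻¹ ^ 2 * (m * ∑ i, ‖u i - mean u‖ ^ 2) := by
        rw [mul_pow]
        gcongr
        simpa using sq_sum_le_card_mul_sum_sq (s := univ) (f := fun i => ‖u i - mean u‖)
    _ = (m : ℝ)⁻¹ * ∑ i, ‖u i - mean u‖ ^ 2 := by
        rcases Nat.eq_zero_or_pos m with rfl | hm
        · simp
        field_simp

end RmsDeviation

lemma specNorm_nonneg {a b : ℕ} (A : Matrix (Fin a) (Fin b) ℝ) : 0 ≤ specNorm A :=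
  norm_nonneg _

lemma sum_sq_mulVec_le {a b : ℕ} (A : Matrix (Fin a) (Fin b) ℝ) (w : Fin b → ℝ) :
    ∑ i, (∑ h, A i h * w h) ^ 2 ≤ specNorm A ^ 2 * ∑ h, w h ^ 2 := by
  have h := pow_le_pow_left₀ (norm_nonneg _)
    ((LinearMap.toContinuousLinearMap (Matrix.toEuclideanLin A)).le_opNorm (WithLp.toLp 2 w)) 2
  simpa [specNorm, mul_pow, EuclideanSpace.norm_sq_eq, Matrix.mulVec, dotProduct] using h

lemma sum_norm_sum_smul_sq_le {E : Type*} [NormedAddCommGroup E] [InnerProductSpace ℝ E]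
    [FiniteDimensional ℝ E] {a b : ℕ} (A : Matrix (Fin a) (Fin b) ℝ) (v : Fin b → E) :
    ∑ i, ‖∑ h, A i h • v h‖ ^ 2 ≤ specNorm A ^ 2 * ∑ h, ‖v h‖ ^ 2 := by
  set e := stdOrthonormalBasis ℝ E
  calc ∑ i, ‖∑ h, A i h • v h‖ ^ 2
      = ∑ c, ∑ i, (∑ h, A i h * ⟪e c, v h⟫) ^ 2 := by
        simp only [← e.sum_sq_inner_right, inner_sum, inner_smul_right]
        exact sum_comm
    _ ≤ ∑ c, specNorm A ^ 2 * ∑ h, ⟪e c, v h⟫ ^ 2 := sum_le_sum fun c _ => sum_sq_mulVec_le A _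
    _ = specNorm A ^ 2 * ∑ h, ‖v h‖ ^ 2 := by
        simp only [← mul_sum, ← e.sum_sq_inner_right]
        rw [sum_comm]

/-- Since the rows of `W` sum to one, `W u - mean u = (W - P_m) (u - mean u)`. -/
lemma rmsDev_mix_le {E : Type*} [NormedAddCommGroup E] [InnerProductSpace ℝ E]
    [FiniteDimensional ℝ E] (W : Matrix (Fin m) (Fin m) ℝ) (hW : ∀ i, ∑ h, W i h = 1)
    (u : Fin m → E) :
    rmsDev (fun i => ∑ h, W i h • u h) ≤ specNorm (W - Pmat m) * rmsDev u := by
  have hcentre : ∀ i, ∑ h, W i h • u h - mean u = ∑ h, (W - Pmat m) i h • (u h - mean u) := by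
    intro i
    calc ∑ h, W i h • u h - mean u
        = ∑ h, W i h • (u h - mean u) - (m : ℝ)⁻¹ • ∑ h, (u h - mean u) := by
          rw [sum_sub_mean, smul_zero, sub_zero]
          simp only [smul_sub, sum_sub_distrib, ← sum_smul, hW, one_smul]
      _ = ∑ h, (W - Pmat m) i h • (u h - mean u) := by
          simp only [Matrix.sub_apply, Pmat, Matrix.of_apply, sub_smul, sum_sub_distrib, ← smul_sum]
  calc rmsDev (fun i => ∑ h, W i h • u h)
      ≤ √((m : ℝ)⁻¹ * ∑ i, ‖∑ h, (W - Pmat m) i h • (u h - mean u)‖ ^ 2) := by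
        simpa only [hcentre] using rmsDev_le (fun i => ∑ h, W i h • u h) (mean u)
    _ ≤ √((m : ℝ)⁻¹ * (specNorm (W - Pmat m) ^ 2 * ∑ h, ‖u h - mean u‖ ^ 2)) := by
        gcongr
        exact sum_norm_sum_smul_sq_le _ _
    _ = specNorm (W - Pmat m) * rmsDev u := by
        rw [mul_left_comm, Real.sqrt_mul (sq_nonneg _), Real.sqrt_sq (specNorm_nonneg _), rmsDev]

lemma norm_toLp_prod (u : Vec dx) (v : Vec dy) :
    ‖WithLp.toLp 2 (u, v)‖ = pnorm u v :=
  WithLp.prod_norm_eq_of_L2 _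

/-- The partial gradients are the components of the gradient on the ℓ2 product, whose norm is at
most the Lipschitz constant. -/
lemma pnorm_gradX_gradY_le {G : ℝ} (hG : 0 ≤ G) (g : Vec dx → Vec dy → ℝ)
    (hd : Differentiable ℝ (fun p : Vec dx × Vec dy => g p.1 p.2))
    (hl : ∀ x y x' y', |g x y - g x' y'| ≤ G * pnorm (x - x') (y - y'))
    (x : Vec dx) (y : Vec dy) :
    pnorm (gradX g x y) (gradY g x y) ≤ G := by
  set e := WithLp.prodContinuousLinearEquiv 2 ℝ (Vec dx) (Vec dy)
  set D := fderiv ℝ (fun p : Vec dx × Vec dy => g p.1 p.2) (x, y)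
  have hD : HasFDerivAt (fun p : Vec dx × Vec dy => g p.1 p.2) D (x, y) := (hd _).hasFDerivAt
  have hDe : ‖D.comp (e : WithLp 2 (Vec dx × Vec dy) →L[ℝ] Vec dx × Vec dy)‖ ≤ G := by
    refine (hD.comp (WithLp.toLp 2 (x, y)) e.hasFDerivAt).le_of_lip' hG
      (Filter.Eventually.of_forall fun p => ?_)
    simpa [e, Real.norm_eq_abs, WithLp.prod_norm_eq_of_L2, pnorm] using hl p.fst p.snd x y
  have hgx : ∀ u, ⟪gradX g x y, u⟫ = D (u, 0) := fun u => by
    have hx : HasFDerivAt (fun x' => g x' y) (D.comp (.inl ℝ _ _)) x :=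
      hD.comp (f := fun x' => (x', y)) x (hasFDerivAt_prodMk_left x y)
    rw [gradX, gradient, hx.fderiv, InnerProductSpace.toDual_symm_apply]
    rfl
  have hgy : ∀ v, ⟪gradY g x y, v⟫ = D (0, v) := fun v => by
    have hy : HasFDerivAt (fun y' => g x y') (D.comp (.inr ℝ _ _)) y :=
      hD.comp (f := fun y' => (x, y')) y (hasFDerivAt_prodMk_right x y)
    rw [gradY, gradient, hy.fderiv, InnerProductSpace.toDual_symm_apply]
    rfl
  set u := gradX g x y
  set v := gradY g x y
  have hsq : pnorm u v ^ 2 ≤ G * pnorm u v :=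
    calc pnorm u v ^ 2 = ⟪u, u⟫ + ⟪v, v⟫ := by
          rw [pnorm, Real.sq_sqrt (by positivity), real_inner_self_eq_norm_sq,
            real_inner_self_eq_norm_sq]
      _ = D.comp (e : WithLp 2 (Vec dx × Vec dy) →L[ℝ] Vec dx × Vec dy) (WithLp.toLp 2 (u, v)) := by
          rw [hgx, hgy, ← map_add, Prod.mk_add_mk, add_zero, zero_add]
          rfl
      _ ≤ G * pnorm u v := by
          rw [← norm_toLp_prod]
          exact (le_abs_self _).trans ((D.comp _).le_of_opNorm_le hDe _)
  nlinarith [show 0 ≤ pnorm u v from Real.sqrt_nonneg _]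

def toL2 (st : Fin m → Vec dx × Vec dy) : Fin m → WithLp 2 (Vec dx × Vec dy) :=
  fun i => WithLp.toLp 2 (st i)

lemma mean_toL2 (st : Fin m → Vec dx × Vec dy) :
    mean (toL2 st) = WithLp.toLp 2 (xbar st, ybar st) := by
  rw [mean, ← WithLp.toLp_sum, ← WithLp.toLp_smul]
  congr 1
  ext : 1 <;> simp [toL2, xbar, ybar, Prod.fst_sum, Prod.snd_sum]

lemma consensus_le_rmsDev (st : Fin m → Vec dx × Vec dy) :
    consensus st ≤ rmsDev (toL2 st) := by
  have hterm : ∀ i, pnorm ((st i).1 - xbar st) ((st i).2 - ybar st)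
      = ‖toL2 st i - mean (toL2 st)‖ := fun i => by
    rw [mean_toL2, toL2, ← WithLp.toLp_sub, norm_toLp_prod]
    rfl
  simpa only [consensus, hterm] using mean_norm_sub_mean_le_rmsDev (toL2 st)

def GradBound (G : ℝ) (f : ∀ i, Vec dx → Vec dy → Z i → ℝ) : Prop :=
  ∀ i (ξ : Z i) x y, pnorm (gradX (fun a b => f i a b ξ) x y) (gradY (fun a b => f i a b ξ) x y) ≤ G

lemma GLip.gradBound {G : ℝ} (hG : 0 ≤ G) {f : ∀ i, Vec dx → Vec dy → Z i → ℝ} (hf : GLip G f)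
    (hdiff : ∀ i (ξ : Z i), Differentiable ℝ (fun p : Vec dx × Vec dy => f i p.1 p.2 ξ)) :
    GradBound G f :=
  fun i ξ => pnorm_gradX_gradY_le hG _ (hdiff i ξ) (hf i ξ)

section Iterates

variable {f : ∀ i, Vec dx → Vec dy → Z i → ℝ} {S : ∀ i, Fin n → Z i} {G η : ℝ}

lemma toL2_sgdaStep (jj : Fin m → Fin n) (st : Fin m → Vec dx × Vec dy) :
    toL2 (sgdaStep f S η jj st) = toL2 st + η • fun i =>
      WithLp.toLp 2 (-gradX (fun a b => f i a b (S i (jj i))) (st i).1 (st i).2,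
        gradY (fun a b => f i a b (S i (jj i))) (st i).1 (st i).2) := by
  ext1 i
  simp only [toL2, sgdaStep, Pi.add_apply, Pi.smul_apply, ← WithLp.toLp_smul, ← WithLp.toLp_add,
    Prod.smul_mk, smul_neg, sub_eq_add_neg]
  rfl

lemma toL2_sgdaComm (W : Matrix (Fin m) (Fin m) ℝ) (st : Fin m → Vec dx × Vec dy) :
    toL2 (sgdaComm W st) = fun i => ∑ h, W i h • toL2 st h := by
  ext1 i
  simp only [toL2, sgdaComm, ← WithLp.toLp_smul, ← WithLp.toLp_sum]
  congr 1
  ext : 1 <;> simp [Prod.fst_sum, Prod.snd_sum]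

lemma rmsDev_sgdaStep_le (hgrad : GradBound G f) (hG : 0 ≤ G) (hη : 0 ≤ η)
    (jj : Fin m → Fin n) (st : Fin m → Vec dx × Vec dy) :
    rmsDev (toL2 (sgdaStep f S η jj st)) ≤ rmsDev (toL2 st) + η * G := by
  rw [toL2_sgdaStep]
  refine (rmsDev_add_le _ _).trans (add_le_add le_rfl ?_)
  rw [rmsDev_smul, abs_of_nonneg hη]
  refine mul_le_mul_of_nonneg_left (rmsDev_le_of_norm_le hG fun i => ?_) hη
  rw [norm_toLp_prod, pnorm, norm_neg]
  exact hgrad _ _ _ _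

lemma rmsDev_sgdaLocal_le (hgrad : GradBound G f) (hG : 0 ≤ G) (hη : 0 ≤ η)
    (j : ℕ → ℕ → Fin m → Fin n) (t k : ℕ) (st : Fin m → Vec dx × Vec dy) :
    rmsDev (toL2 (sgdaLocal f S (fun _ _ => η) j t k st)) ≤ rmsDev (toL2 st) + k * (η * G) := by
  induction k with
  | zero => simp [sgdaLocal]
  | succ k ih =>
    calc rmsDev (toL2 (sgdaLocal f S (fun _ _ => η) j t (k + 1) st))
        ≤ rmsDev (toL2 (sgdaLocal f S (fun _ _ => η) j t k st)) + η * G :=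
          rmsDev_sgdaStep_le hgrad hG hη _ _
      _ ≤ rmsDev (toL2 st) + (k + 1 : ℕ) * (η * G) := by push_cast; linarith

/-- The bound `K η G λ / (1 - λ)` is the fixed point of `c ↦ λ (c + K η G)`. -/
lemma rmsDev_sgdaRound_le (hgrad : GradBound G f) (hG : 0 ≤ G) (hη : 0 ≤ η)
    {W : Matrix (Fin m) (Fin m) ℝ} (hW : ∀ i, ∑ h, W i h = 1) (hlam : specNorm (W - Pmat m) < 1)
    (K : ℕ) (j : ℕ → ℕ → Fin m → Fin n) (t : ℕ) :
    rmsDev (toL2 (sgdaRound f S W (fun _ _ => η) K j t))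
      ≤ K * (η * G) * (specNorm (W - Pmat m) / (1 - specNorm (W - Pmat m))) := by
  set lam := specNorm (W - Pmat m)
  have hlam0 : 0 ≤ lam := specNorm_nonneg _
  have hgap : 0 < 1 - lam := by linarith
  induction t with
  | zero =>
    rw [show toL2 (sgdaRound f S W (fun _ _ => η) K j 0) = 0 from rfl, rmsDev_zero]
    exact mul_nonneg (by positivity) (div_nonneg hlam0 hgap.le)
  | succ t ih =>
    calc rmsDev (toL2 (sgdaRound f S W (fun _ _ => η) K j (t + 1)))
        ≤ lam * rmsDev (toL2 (sgdaLocal f S (fun _ _ => η) j (t + 1) K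
            (sgdaRound f S W (fun _ _ => η) K j t))) := by
          rw [sgdaRound, toL2_sgdaComm]
          exact rmsDev_mix_le W hW _
      _ ≤ lam * (K * (η * G) * (lam / (1 - lam)) + K * (η * G)) := by
          gcongr
          exact (rmsDev_sgdaLocal_le hgrad hG hη j _ K _).trans (by gcongr)
      _ = K * (η * G) * (lam / (1 - lam)) := by
          field_simp
          ring

lemma rmsDev_sgdaIter_le (hgrad : GradBound G f) (hG : 0 ≤ G) (hη : 0 ≤ η)
    {W : Matrix (Fin m) (Fin m) ℝ} (hW : ∀ i, ∑ h, W i h = 1) (hlam : specNorm (W - Pmat m) < 1)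
    (K : ℕ) (j : ℕ → ℕ → Fin m → Fin n) (t k : ℕ) :
    rmsDev (toL2 (sgdaIter f S W (fun _ _ => η) K j t k))
      ≤ η * G * (k + K * specNorm (W - Pmat m) / (1 - specNorm (W - Pmat m))) := by
  have hround := rmsDev_sgdaRound_le (S := S) hgrad hG hη hW hlam K j (t - 1)
  calc rmsDev (toL2 (sgdaIter f S W (fun _ _ => η) K j t k))
      ≤ rmsDev (toL2 (sgdaRound f S W (fun _ _ => η) K j (t - 1))) + k * (η * G) :=
        rmsDev_sgdaLocal_le hgrad hG hη j t k _
    _ ≤ _ := by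
      rw [mul_div_assoc]
      linarith

end Iterates

lemma add_mul_div_one_sub_le_sqrt {lam : ℝ} (hlam0 : 0 ≤ lam) (hlam1 : lam < 1) (k K : ℝ) :
    k + K * lam / (1 - lam) ≤ √(1 / (1 - lam) * (k ^ 2 + 2 * lam / (1 - lam ^ 2) * K ^ 2)) := by
  have hgap : 0 < 1 - lam := by linarith
  have hgap2 : 0 < 1 - lam ^ 2 := by nlinarith
  have hlhs : k + K * lam / (1 - lam) = (k * (1 - lam) + K * lam) / (1 - lam) := by
    field_simp
  have hrhs : 1 / (1 - lam) * (k ^ 2 + 2 * lam / (1 - lam ^ 2) * K ^ 2)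
      = (k ^ 2 * (1 - lam ^ 2) + 2 * lam * K ^ 2) / ((1 - lam) ^ 2 * (1 + lam)) := by
    field_simp
    ring
  rw [hlhs, hrhs]
  refine Real.le_sqrt_of_sq_le ?_
  rw [div_pow, div_le_div_iff₀ (by positivity) (by positivity)]
  -- the difference of the two sides is `λ (1 - λ)³ ((1 + λ) (K - k)² + K²)`
  nlinarith [mul_nonneg (mul_nonneg hlam0 (pow_nonneg hgap.le 3)) (sq_nonneg (k - K)),
    mul_nonneg (mul_nonneg hlam0 (pow_nonneg hgap.le 3)) (mul_nonneg hlam0 (sq_nonneg (k - K))),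
    mul_nonneg (mul_nonneg hlam0 (pow_nonneg hgap.le 3)) (sq_nonneg K)]

theorem stmt_18_general {dx dy m n K : ℕ} {Z : Fin m → Type*}
    (f : ∀ i, Vec dx → Vec dy → Z i → ℝ)
    (W : Matrix (Fin m) (Fin m) ℝ)
    (hWrow : ∀ i, ∑ h, W i h = 1)
    (lam : ℝ) (hlam : lam = specNorm (W - Pmat m)) (hlam1 : lam < 1)
    (G : ℝ) (hG : 0 < G)
    (hLip : GLip G f)
    (hdiff : ∀ i (ξ : Z i), Differentiable ℝ (fun p : Vec dx × Vec dy => f i p.1 p.2 ξ))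
    (η : ℝ) (hηpos : 0 ≤ η)
    (j : ℕ → ℕ → Fin m → Fin n) (S : ∀ i, Fin n → Z i) :
    ∀ t k, 1 ≤ t → k ≤ K →
      sgdaCons f S W (fun _ _ => η) K j t k
        ≤ η * G * Real.sqrt (1 / (1 - lam) * (k ^ 2 + 2 * lam / (1 - lam ^ 2) * K ^ 2)) := by
  intro t k _ _
  subst hlam
  calc sgdaCons f S W (fun _ _ => η) K j t k
      ≤ rmsDev (toL2 (sgdaIter f S W (fun _ _ => η) K j t k)) := consensus_le_rmsDev _
    _ ≤ η * G * (k + K * specNorm (W - Pmat m) / (1 - specNorm (W - Pmat m))) :=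
        rmsDev_sgdaIter_le (hLip.gradBound hG.le hdiff) hG.le hηpos hWrow hlam1 K j t k
    _ ≤ _ := by
        gcongr
        exact add_mul_div_one_sub_le_sqrt (specNorm_nonneg _) hlam1 k K

/-- consensus-error bound for Distributed-SGDA with a fixed step size,
in terms of the spectral gap of the mixing matrix. -/
theorem stmt_18 {dx dy m n K : ℕ} {Z : Fin m → Type*}
    (hm : 0 < m) (hn : 0 < n)
    (f : ∀ i, Vec dx → Vec dy → Z i → ℝ)
    (W : Matrix (Fin m) (Fin m) ℝ)
    (hWsymm : W.IsSymm) (hWnonneg : ∀ i h, 0 ≤ W i h) (hWrow : ∀ i, ∑ h, W i h = 1)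
    (lam : ℝ) (hlam : lam = specNorm (W - Pmat m)) (hlam1 : lam < 1)
    (G : ℝ) (hG : 0 < G)
    (hLip : GLip G f)
    (hdiff : ∀ i (ξ : Z i), Differentiable ℝ (fun p : Vec dx × Vec dy => f i p.1 p.2 ξ))
    (η : ℝ) (hηpos : 0 ≤ η)
    (j : ℕ → ℕ → Fin m → Fin n) (S : ∀ i, Fin n → Z i) :
    ∀ t k, 1 ≤ t → k ≤ K →
      sgdaCons f S W (fun _ _ => η) K j t k
        ≤ η * G * Real.sqrt (1 / (1 - lam) * (k ^ 2 + 2 * lam / (1 - lam ^ 2) * K ^ 2)) :=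
  stmt_18_general f W hWrow lam hlam hlam1 G hG hLip hdiff η hηpos j S

end
end
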